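/- For n ≥ 2, G_1(n) = (2n-1) · G_1(n-1) + G_1(n-2), with G_1(0) = 1 and G_1(1) = 2. -/

import Mathlib

/-!
A partition of a `k`-set into `n` blocks of size at most two is determined by its two-element
blocks, which form a matching with `k - n` edges, and every matching extends to such a partition
by singletons. Removing a point shows that the `j`-edge matchings of a `k`-set number
`C(k, 2j) (2j-1)‼`, so `G_1(n) = ∑ᵢ C(n+i, 2i) (2i-1)‼` is the value at `1` of the Bessel
polynomial `y_n`. The recurrence is then the three-term recurrence
`y_{n+2}(x) = (2n+3) x y_{n+1}(x) + y_n(x)`, which holds termwise by Pascal's rule and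
`(k+1-2j) C(k+1, 2j) = (k+1) C(k, 2j)`.
-/

/-- `E σ n k` is the number of set partitions of `{1,...,k}` into exactly `n`
nonempty blocks, each of size at most `σ + 1`. -/
noncomputable def E (σ n k : ℕ) : ℕ :=
  Nat.card {P : Finpartition (Finset.univ : Finset (Fin k)) //
    P.parts.card = n ∧ ∀ p ∈ P.parts, p.card ≤ σ + 1}

/-- `G σ n = ∑_{k=n}^{(σ+1)n} E σ n k`. -/
noncomputable def G (σ n : ℕ) : ℕ := ∑ k ∈ Finset.Icc n ((σ + 1) * n), E σ n k

open Finset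
open scoped Nat

-- At `j = 0` the truncated `2 * 0 - 1` gives `0‼ = 1`, the value of `(-1)‼`.
def matchingNumber (k j : ℕ) : ℕ := k.choose (2 * j) * (2 * j - 1)‼

lemma matchingNumber_zero_right (k : ℕ) : matchingNumber k 0 = 1 := by
  simp [matchingNumber]

lemma matchingNumber_eq_zero_of_lt {k j : ℕ} (h : k < 2 * j) : matchingNumber k j = 0 := by
  simp [matchingNumber, Nat.choose_eq_zero_of_lt h]

lemma matchingNumber_succ_succ (k j : ℕ) :
    matchingNumber (k + 1) (j + 1) = matchingNumber k (j + 1) + k * matchingNumber (k - 1) j := by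
  have hchoose : k.choose (2 * j + 1) * (2 * j + 1) = k * (k - 1).choose (2 * j) := by
    cases k with
    | zero => simp
    | succ k => exact (Nat.add_one_mul_choose_eq k (2 * j)).symm
  simp only [matchingNumber, Nat.mul_add_one, Nat.add_succ_sub_one, Nat.doubleFactorial_add_one,
    Nat.choose_succ_succ']
  rw [← Nat.mul_add_one]
  linear_combination (2 * j - 1)‼ * hchoose

lemma succ_sub_mul_matchingNumber (k j : ℕ) :
    (k + 1 - 2 * j) * matchingNumber (k + 1) j = (k + 1) * matchingNumber k j := by
  simp only [matchingNumber]
  linear_combination (2 * j - 1)‼ * (Nat.choose_mul_succ_eq k (2 * j)).symm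

lemma matchingNumber_add_three {n i : ℕ} (hi : i ≤ n + 1) :
    matchingNumber (n + i + 3) (i + 1) =
      (2 * n + 3) * matchingNumber (n + i + 1) i + matchingNumber (n + i + 1) (i + 1) := by
  have h₁ := matchingNumber_succ_succ (n + i + 2) i
  have h₂ := matchingNumber_succ_succ (n + i + 1) i
  have h₃ := succ_sub_mul_matchingNumber (n + i) i
  have hcoeff : n + i + 1 - 2 * i + (n + i + 2) = 2 * n + 3 := by omega
  rw [show n + i + 2 - 1 = n + i + 1 by omega] at h₁
  rw [Nat.add_sub_cancel] at h₂
  rw [h₁, h₂, ← h₃, ← hcoeff]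
  ring

-- `y_n(x) = ∑ᵢ (n+i)! / ((n-i)! i!) (x/2)^i`, as `(n+i)! / ((n-i)! (2i)!) = C(n+i, 2i)` and
-- `(2i)! / (2^i i!) = (2i-1)‼`.
def besselY {R : Type*} [CommSemiring R] (n : ℕ) (x : R) : R :=
  ∑ i ∈ range (n + 1), (matchingNumber (n + i) i : R) * x ^ i

lemma besselY_add_two {R : Type*} [CommSemiring R] (n : ℕ) (x : R) :
    besselY (n + 2) x = (2 * n + 3) * x * besselY (n + 1) x + besselY n x := by
  have hextend : besselY n x = ∑ i ∈ range (n + 3), (matchingNumber (n + i) i : R) * x ^ i := by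
    rw [besselY, sum_range_succ _ (n + 2), sum_range_succ _ (n + 1),
      matchingNumber_eq_zero_of_lt (by omega), matchingNumber_eq_zero_of_lt (by omega)]
    simp
  rw [besselY, sum_range_succ', hextend, sum_range_succ' _ (n + 2), besselY, mul_sum]
  simp only [matchingNumber_zero_right, add_zero, ← add_assoc, ← sum_add_distrib]
  congr 1
  refine sum_congr rfl fun i hi ↦ ?_
  rw [show n + 2 + i + 1 = n + i + 3 by ring, show n + 1 + i = n + i + 1 by ring,
    matchingNumber_add_three (by simp at hi; omega)]
  push_cast
  ring

variable {α : Type*}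

open Classical in
noncomputable def Finset.matchings (s : Finset α) (j : ℕ) : Finset (Finset (Finset α)) :=
  {M ∈ (s.powersetCard 2).powersetCard j | (M : Set (Finset α)).PairwiseDisjoint id}

namespace Finset

variable {s t : Finset α} {a : α} {j : ℕ} {M : Finset (Finset α)}

lemma mem_matchings : M ∈ s.matchings j ↔
    (∀ p ∈ M, p ⊆ s ∧ #p = 2) ∧ #M = j ∧ (M : Set (Finset α)).PairwiseDisjoint id := by
  simp only [matchings, mem_filter, mem_powersetCard, subset_iff (s₁ := M)]
  tauto

lemma matchings_zero : s.matchings 0 = {∅} := by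
  ext M
  simp [mem_matchings, card_eq_zero]
  aesop

lemma matchings_empty_succ : (∅ : Finset α).matchings (j + 1) = ∅ := by
  rw [matchings, powersetCard_eq_empty.mpr (by simp), filter_empty]

lemma matchings_mono (h : s ⊆ t) : s.matchings j ⊆ t.matchings j := fun M hM ↦ by
  rw [mem_matchings] at hM ⊢
  exact ⟨fun p hp ↦ ⟨(hM.1 p hp).1.trans h, (hM.1 p hp).2⟩, hM.2⟩

lemma notMem_of_mem_matchings {p : Finset α} (hM : M ∈ s.matchings j) (hp : p ∈ M) (ha : a ∉ s) :
    a ∉ p :=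
  fun hap ↦ ha ((mem_matchings.1 hM).1 p hp |>.1 hap)

variable [DecidableEq α]

lemma insert_pair_mem_matchings {b : α} (ha : a ∉ t) (hb : b ∈ t)
    (hM : M ∈ (t.erase b).matchings j) : insert {a, b} M ∈ (insert a t).matchings (j + 1) := by
  have hpair : ∀ q ∈ M, Disjoint {a, b} q := fun q hq ↦ by
    simp only [disjoint_insert_left, disjoint_singleton_left]
    exact ⟨notMem_of_mem_matchings hM hq (fun h ↦ ha (mem_of_mem_erase h)),
      notMem_of_mem_matchings hM hq (notMem_erase b t)⟩
  have hnot : {a, b} ∉ M := fun h ↦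
    notMem_of_mem_matchings hM h (fun h ↦ ha (mem_of_mem_erase h)) (mem_insert_self a {b})
  obtain ⟨hsub, hcard, hdisj⟩ := mem_matchings.1 hM
  refine mem_matchings.2 ⟨?_, by rw [card_insert_of_notMem hnot, hcard], ?_⟩
  · intro p hp
    rcases mem_insert.1 hp with rfl | hp
    · exact ⟨insert_subset_insert a (singleton_subset_iff.2 hb),
        card_pair (fun h ↦ ha (h ▸ hb))⟩
    · exact ⟨(hsub p hp).1.trans ((erase_subset b t).trans (subset_insert a t)), (hsub p hp).2⟩
  · rw [coe_insert]
    exact hdisj.insert fun q hq _ ↦ hpair q hq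

lemma matchings_insert (ha : a ∉ t) :
    (insert a t).matchings (j + 1) = t.matchings (j + 1) ∪
      (t.sigma fun b ↦ (t.erase b).matchings j).image fun x ↦ insert {a, x.1} x.2 := by
  ext M
  simp only [mem_union, mem_image, mem_sigma, Sigma.exists]
  constructor
  · intro hM
    obtain ⟨hsub, hcard, hdisj⟩ := mem_matchings.1 hM
    by_cases h : ∃ p ∈ M, a ∈ p
    · obtain ⟨p, hpM, hap⟩ := h
      obtain ⟨b, hb⟩ := card_eq_one.1
        (by rw [card_erase_of_mem hap, (hsub p hpM).2] : #(p.erase a) = 1)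
      have hp : p = {a, b} := by rw [← insert_erase hap, hb]
      have hba : b ≠ a := (mem_erase.1 (hb ▸ mem_singleton_self b)).1
      have hbt : b ∈ t :=
        (mem_insert.1 ((hsub p hpM).1 (by simp [hp]))).resolve_left hba
      refine Or.inr ⟨b, M.erase p, ⟨hbt, mem_matchings.2 ⟨fun q hq ↦ ⟨fun x hx ↦ ?_,
        (hsub q (mem_of_mem_erase hq)).2⟩, by rw [card_erase_of_mem hpM, hcard, Nat.add_sub_cancel],
        hdisj.subset (coe_subset.2 (erase_subset p M))⟩⟩, by rw [← hp, insert_erase hpM]⟩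
      have hxp : x ∉ p := disjoint_left.1
        (hdisj (mem_of_mem_erase hq) hpM (ne_of_mem_erase hq)) hx
      have hxs := (hsub q (mem_of_mem_erase hq)).1 hx
      simp only [hp, mem_insert, mem_singleton, not_or] at hxp hxs
      exact mem_erase.2 ⟨hxp.2, hxs.resolve_left hxp.1⟩
    · push Not at h
      refine Or.inl (mem_matchings.2 ⟨fun p hp ↦ ⟨?_, (hsub p hp).2⟩, hcard, hdisj⟩)
      exact fun x hx ↦ mem_of_mem_insert_of_ne ((hsub p hp).1 hx) (fun h' ↦ h p hp (h' ▸ hx))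
  · rintro (hM | ⟨b, M', ⟨hb, hM'⟩, rfl⟩)
    · exact matchings_mono (subset_insert a t) hM
    · exact insert_pair_mem_matchings ha hb hM'

lemma card_matchings_insert (ha : a ∉ t) : #((insert a t).matchings (j + 1)) =
    #(t.matchings (j + 1)) + ∑ b ∈ t, #((t.erase b).matchings j) := by
  have hat : ∀ {b N}, b ∈ t → N ∈ (t.erase b).matchings j → ∀ q ∈ N, a ∉ q :=
    fun _ hN _ hq ↦ notMem_of_mem_matchings hN hq fun h ↦ ha (mem_of_mem_erase h)
  rw [matchings_insert ha, card_union_of_disjoint, card_image_of_injOn, card_sigma]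
  · rintro ⟨b, N⟩ hN ⟨b', N'⟩ hN' h
    simp only [coe_sigma, Set.mem_sigma_iff, mem_coe] at hN hN' h
    have hpair : ({a, b} : Finset α) = {a, b'} := by
      have := h ▸ mem_insert_self {a, b} N
      exact (mem_insert.1 this).resolve_right fun h' ↦ hat hN'.1 hN'.2 _ h' (mem_insert_self a _)
    obtain rfl : b = b' := by
      have := hpair ▸ mem_insert_of_mem (mem_singleton_self b)
      simpa [show b ≠ a from fun h ↦ ha (h ▸ hN.1)] using this
    have hN : N = N' := by
      rw [← erase_insert (fun h' ↦ hat hN.1 hN.2 _ h' (mem_insert_self a {b})), h,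
        erase_insert (fun h' ↦ hat hN'.1 hN'.2 _ h' (mem_insert_self a {b}))]
    rw [hN]
  · rw [disjoint_left]
    intro M hM hM'
    obtain ⟨⟨b, N⟩, -, rfl⟩ := mem_image.1 hM'
    exact notMem_of_mem_matchings hM (mem_insert_self _ N) ha (mem_insert_self a {b})

lemma card_matchings (s : Finset α) (j : ℕ) : #(s.matchings j) = matchingNumber #s j := by
  induction j generalizing s with
  | zero => simp [matchings_zero, matchingNumber_zero_right]
  | succ j ihj =>
    induction s using Finset.induction_on with
    | empty => simp [matchings_empty_succ, matchingNumber_eq_zero_of_lt]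
    | insert a t ha ih =>
      rw [card_matchings_insert ha, ih, sum_congr rfl fun b hb ↦ by rw [ihj, card_erase_of_mem hb],
        sum_const, smul_eq_mul, card_insert_of_notMem ha, matchingNumber_succ_succ]

end Finset

namespace Finpartition

variable [DecidableEq α] {s : Finset α} {j : ℕ} {M : Finset (Finset α)}

lemma eq_of_parts_subset {P Q : Finpartition s} (h : P.parts ⊆ Q.parts) : P = Q := by
  refine Finpartition.ext (Subset.antisymm h fun q hq ↦ ?_)
  obtain ⟨x, hx⟩ := Q.nonempty_of_mem_parts hq
  obtain ⟨p, hp, hxp⟩ := P.exists_mem (Q.subset hq hx)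
  rwa [Q.eq_of_mem_parts hq (h hp) hx hxp]

lemma card_parts_add_card_filter_card_eq_two (P : Finpartition s) (hP : ∀ p ∈ P.parts, #p ≤ 2) :
    #P.parts + #{p ∈ P.parts | #p = 2} = #s := by
  rw [← P.sum_card_parts, card_filter, card_eq_sum_ones, ← sum_add_distrib]
  refine sum_congr rfl fun p hp ↦ ?_
  have := hP p hp
  have := (P.nonempty_of_mem_parts hp).card_pos
  split_ifs <;> omega

def ofMatching (hM : M ∈ s.matchings j) : Finpartition s where
  parts := M ∪ (s \ M.sup id).image ({·})
  supIndep := by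
    obtain ⟨-, -, hdisj⟩ := mem_matchings.1 hM
    rw [supIndep_iff_pairwiseDisjoint, coe_union, coe_image]
    refine hdisj.union ?_ ?_
    · rintro _ ⟨x, -, rfl⟩ _ ⟨y, -, rfl⟩ hxy
      exact disjoint_singleton.2 fun h ↦ hxy (h ▸ rfl)
    · rintro p hp _ ⟨y, hy, rfl⟩ -
      simp only [mem_coe, mem_sdiff, mem_sup, id, not_exists, not_and] at hy
      exact disjoint_singleton_right.2 (hy.2 p hp)
  sup_parts := by
    refine le_antisymm (Finset.sup_le fun p hp ↦ ?_) fun x hx ↦ ?_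
    · rcases mem_union.1 hp with hp | hp
      · exact ((mem_matchings.1 hM).1 p hp).1
      · obtain ⟨x, hx, rfl⟩ := mem_image.1 hp
        exact singleton_subset_iff.2 (mem_sdiff.1 hx).1
    · rw [mem_sup]
      by_cases hxM : x ∈ M.sup id
      · obtain ⟨p, hp, hxp⟩ := mem_sup.1 hxM
        exact ⟨p, mem_union_left _ hp, hxp⟩
      · exact ⟨{x}, mem_union_right _ (mem_image_of_mem _ (mem_sdiff.2 ⟨hx, hxM⟩)),
          mem_singleton_self x⟩
  bot_notMem := by
    rw [mem_union, not_or]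
    refine ⟨fun h ↦ ?_, by simp⟩
    simpa using ((mem_matchings.1 hM).1 _ h).2

lemma filter_parts_ofMatching (hM : M ∈ s.matchings j) :
    {p ∈ (ofMatching hM).parts | #p = 2} = M := by
  rw [ofMatching, filter_union, filter_true_of_mem fun p hp ↦ ((mem_matchings.1 hM).1 p hp).2,
    filter_false_of_mem (by rintro _ h; obtain ⟨x, -, rfl⟩ := mem_image.1 h; simp), union_empty]

lemma card_le_two_of_mem_ofMatching (hM : M ∈ s.matchings j) :
    ∀ p ∈ (ofMatching hM).parts, #p ≤ 2 := by
  intro p hp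
  rcases mem_union.1 hp with hp | hp
  · exact ((mem_matchings.1 hM).1 p hp).2.le
  · obtain ⟨x, -, rfl⟩ := mem_image.1 hp
    simp

lemma card_parts_ofMatching (hM : M ∈ s.matchings j) : #(ofMatching hM).parts = #s - j := by
  have := card_parts_add_card_filter_card_eq_two _ (card_le_two_of_mem_ofMatching hM)
  rw [filter_parts_ofMatching, (mem_matchings.1 hM).2.1] at this
  omega

lemma filter_parts_mem_matchings {n : ℕ} (P : Finpartition s) (hP : ∀ p ∈ P.parts, #p ≤ 2)
    (hn : #P.parts = n) : {p ∈ P.parts | #p = 2} ∈ s.matchings (#s - n) := by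
  refine mem_matchings.2 ⟨fun p hp ↦ ⟨P.subset (mem_filter.1 hp).1, (mem_filter.1 hp).2⟩, ?_,
    P.disjoint.subset (coe_subset.2 (filter_subset _ _))⟩
  have := card_parts_add_card_filter_card_eq_two P hP
  omega

lemma ofMatching_filter_parts (P : Finpartition s) (hP : ∀ p ∈ P.parts, #p ≤ 2)
    (hM : {p ∈ P.parts | #p = 2} ∈ s.matchings j) : ofMatching hM = P := by
  refine (eq_of_parts_subset fun q hq ↦ ?_).symm
  by_cases hq2 : #q = 2
  · exact mem_union_left _ (mem_filter.2 ⟨hq, hq2⟩)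
  obtain ⟨x, rfl⟩ : ∃ x, q = {x} := card_eq_one.1 <| by
    have := hP q hq
    have := (P.nonempty_of_mem_parts hq).card_pos
    omega
  refine mem_union_right _
    (mem_image_of_mem _ (mem_sdiff.2 ⟨P.subset hq (mem_singleton_self x), ?_⟩))
  simp only [mem_sup, mem_filter, id]
  rintro ⟨p, ⟨hp, hp2⟩, hxp⟩
  rw [P.eq_of_mem_parts hp hq hxp (mem_singleton_self x)] at hp2
  simp at hp2

def equivMatchings {n : ℕ} (hn : n ≤ #s) :
    {P : Finpartition s // #P.parts = n ∧ ∀ p ∈ P.parts, #p ≤ 2} ≃ s.matchings (#s - n) where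
  toFun P := ⟨_, filter_parts_mem_matchings P.1 P.2.2 P.2.1⟩
  invFun M := ⟨ofMatching M.2, by rw [card_parts_ofMatching]; omega,
    card_le_two_of_mem_ofMatching M.2⟩
  left_inv P :=
    Subtype.ext (ofMatching_filter_parts P.1 P.2.2 (filter_parts_mem_matchings P.1 P.2.2 P.2.1))
  right_inv M := Subtype.ext (filter_parts_ofMatching M.2)

lemma natCard_eq_matchingNumber {n : ℕ} (hn : n ≤ #s) :
    Nat.card {P : Finpartition s // #P.parts = n ∧ ∀ p ∈ P.parts, #p ≤ 2} =
      matchingNumber #s (#s - n) := by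
  rw [Nat.card_congr (equivMatchings hn), Nat.card_eq_finsetCard, card_matchings]

end Finpartition

lemma E_one_of_le {n k : ℕ} (h : n ≤ k) : E 1 n k = matchingNumber k (k - n) := by
  have := Finpartition.natCard_eq_matchingNumber (s := (univ : Finset (Fin k))) (n := n)
    (by simpa using h)
  rwa [card_univ, Fintype.card_fin] at this

lemma G_one_eq_besselY (n : ℕ) : G 1 n = besselY n 1 := by
  rw [G, besselY, show (1 + 1) * n = n + n by ring, ← Ico_add_one_right_eq_Icc,
    sum_Ico_eq_sum_range, show n + n + 1 - n = n + 1 by omega]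
  push_cast
  simp only [one_pow, mul_one]
  exact sum_congr rfl fun i _ ↦ by rw [E_one_of_le (by omega), Nat.add_sub_cancel_left]

theorem stmt_10 :
    G 1 0 = 1 ∧ G 1 1 = 2 ∧
      ∀ n : ℕ, 2 ≤ n → G 1 n = (2 * n - 1) * G 1 (n - 1) + G 1 (n - 2) := by
  simp only [G_one_eq_besselY]
  refine ⟨by decide, by decide, fun n hn ↦ ?_⟩
  obtain ⟨m, rfl⟩ : ∃ m, n = m + 2 := ⟨n - 2, by omega⟩
  rw [besselY_add_two, show 2 * (m + 2) - 1 = 2 * m + 3 by omega, Nat.add_sub_cancel,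
    show m + 2 - 1 = m + 1 by omega, mul_one, Nat.cast_id]
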